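/- Let U ⊆ ℝ⁴ be open with a smooth Lorentzian metric g of signature (+,−,−,−), and let F be a source-free Maxwell field on (U,g). Then the trace H_{ab} = g^{cd}H_{cdab} of the Chevreton tensor is itself trace-free: g^{ab}H_{ab} = 0; equivalently, the complete trace g^{ab}g^{cd}H_{abcd} of the Chevreton tensor vanishes identically. -/

import Mathlib

noncomputable section

open scoped BigOperators

/-- Points of the spacetime: ℝ⁴ in coordinates. -/
abbrev Pt := Fin 4 → ℝ

/-- A point-dependent rank-2 array of components (metric, 2-form, ...). -/
abbrev Met := Pt → Fin 4 → Fin 4 → ℝ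

/-- Partial derivative ∂ₐ f at x (directional derivative along the a-th coordinate). -/
def pd (f : Pt → ℝ) (a : Fin 4) (x : Pt) : ℝ := fderiv ℝ f x (Pi.single a 1)

/-- The Minkowski matrix diag(1,-1,-1,-1). -/
def mink : Matrix (Fin 4) (Fin 4) ℝ :=
  fun a b => if a = b then (if a = 0 then 1 else -1) else 0

/-- g(x) is a symmetric matrix of Lorentzian signature (+,-,-,-) at each point of U. -/
def LorentzSignatureOn (g : Met) (U : Set Pt) : Prop :=
  ∀ x ∈ U, ∃ P : Matrix (Fin 4) (Fin 4) ℝ, IsUnit P.det ∧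
    Matrix.of (g x) = P.transpose * mink * P

/-- ginv is the pointwise inverse matrix of g on U (encodes nondegeneracy of g). -/
def InverseOn (g ginv : Met) (U : Set Pt) : Prop :=
  ∀ x ∈ U, ∀ a b : Fin 4, (∑ k, g x a k * ginv x k b) = if a = b then (1:ℝ) else 0

/-- All components are smooth (C^∞) on U. -/
def SmoothCompOn (g : Met) (U : Set Pt) : Prop :=
  ∀ a b : Fin 4, ContDiffOn ℝ (⊤ : ℕ∞) (fun x => g x a b) U

/-- Pointwise symmetry on U. -/
def SymmOn (g : Met) (U : Set Pt) : Prop := ∀ x ∈ U, ∀ a b : Fin 4, g x a b = g x b a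

/-- Pointwise antisymmetry on U. -/
def AntisymmOn (F : Met) (U : Set Pt) : Prop := ∀ x ∈ U, ∀ a b : Fin 4, F x a b = - F x b a

/-- Christoffel symbols Γ^a_{bc} = (1/2) g^{ad} (∂_b g_{dc} + ∂_c g_{bd} - ∂_d g_{bc}). -/
def Christoffel (g ginv : Met) (x : Pt) (a b c : Fin 4) : ℝ :=
  (1/2) * ∑ d, ginv x a d *
    (pd (fun y => g y d c) b x + pd (fun y => g y b d) c x - pd (fun y => g y b c) d x)

/-- Covariant derivative ∇_a F_{bc} = ∂_a F_{bc} - Γ^d_{ab} F_{dc} - Γ^d_{ac} F_{bd}. -/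
def covdF (g ginv F : Met) (x : Pt) (a b c : Fin 4) : ℝ :=
  pd (fun y => F y b c) a x - (∑ d, Christoffel g ginv x d a b * F x d c)
    - (∑ d, Christoffel g ginv x d a c * F x b d)

/-- F is a source-free Maxwell field on U: smooth, antisymmetric, with
    g^{ab}∇_a F_{bc} = 0 and ∂_{[a}F_{bc]} = 0. -/
def MaxwellOn (g ginv F : Met) (U : Set Pt) : Prop :=
  SmoothCompOn F U ∧ AntisymmOn F U ∧
  (∀ x ∈ U, ∀ c : Fin 4, (∑ a, ∑ b, ginv x a b * covdF g ginv F x a b c) = 0) ∧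
  (∀ x ∈ U, ∀ a b c : Fin 4,
    pd (fun y => F y b c) a x + pd (fun y => F y c a) b x + pd (fun y => F y a b) c x = 0)

/-- Basic superenergy tensor T_{abcd}{A} of a double (1,2)-form A, with metric
    components gm and inverse metric components gi:
    T_{abcd} = -A_{acf}A_{bd}{}^f - A_{adf}A_{bc}{}^f + g_{ab}A_{ecf}A^e{}_d{}^f
               + (1/2) g_{cd}A_{aef}A_b{}^{ef} - (1/4) g_{ab}g_{cd}A_{efg}A^{efg}. -/
def SE (gm gi : Fin 4 → Fin 4 → ℝ) (A : Fin 4 → Fin 4 → Fin 4 → ℝ) (a b c d : Fin 4) : ℝ :=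
  - (∑ f, ∑ k, A a c f * gi f k * A b d k)
  - (∑ f, ∑ k, A a d f * gi f k * A b c k)
  + gm a b * (∑ e, ∑ i, ∑ f, ∑ k, gi e i * gi f k * A e c f * A i d k)
  + (1/2) * gm c d * (∑ e, ∑ i, ∑ f, ∑ k, gi e i * gi f k * A a e f * A b i k)
  - (1/4) * gm a b * gm c d *
      (∑ e, ∑ i, ∑ f, ∑ k, ∑ p, ∑ q, gi e i * gi f k * gi p q * A e f p * A i k q)

/-- E_{abcd}: the basic superenergy tensor of A_{abc} = ∇_a F_{bc}. -/
def Etens (g ginv F : Met) (x : Pt) (a b c d : Fin 4) : ℝ :=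
  SE (g x) (ginv x) (covdF g ginv F x) a b c d

/-- The Chevreton tensor H_{abcd} = (1/2)(E_{abcd} + E_{cdab}). -/
def Chev (g ginv F : Met) (x : Pt) (a b c d : Fin 4) : ℝ :=
  (1/2) * (Etens g ginv F x a b c d + Etens g ginv F x c d a b)

/-- The trace H_{ab} = g^{cd} H_{cdab} of the Chevreton tensor. -/
def ChevTr (g ginv F : Met) (x : Pt) (a b : Fin 4) : ℝ :=
  ∑ c, ∑ d, ginv x c d * Chev g ginv F x c d a b


namespace ChevAux

abbrev P6 := Fin 4 × Fin 4 × Fin 4 × Fin 4 × Fin 4 × Fin 4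
abbrev P4 := Fin 4 × Fin 4 × Fin 4 × Fin 4

/-- The full contraction term N^{ei}N^{fk}N^{pq} A_{efp} A_{ikq}. -/
def Qt (N : Fin 4 → Fin 4 → ℝ) (A : Fin 4 → Fin 4 → Fin 4 → ℝ) (p : P6) : ℝ :=
  N p.1 p.2.1 * N p.2.2.1 p.2.2.2.1 * N p.2.2.2.2.1 p.2.2.2.2.2
    * A p.1 p.2.2.1 p.2.2.2.2.1 * A p.2.1 p.2.2.2.1 p.2.2.2.2.2

lemma flat6 (F : Fin 4 → Fin 4 → Fin 4 → Fin 4 → Fin 4 → Fin 4 → ℝ) :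
    (∑ a, ∑ b, ∑ c, ∑ d, ∑ e, ∑ f, F a b c d e f)
      = ∑ p : P6, F p.1 p.2.1 p.2.2.1 p.2.2.2.1 p.2.2.2.2.1 p.2.2.2.2.2 := by
  simp [Fintype.sum_prod_type]

lemma flat4 (F : Fin 4 → Fin 4 → Fin 4 → Fin 4 → ℝ) :
    (∑ a, ∑ b, ∑ c, ∑ d, F a b c d) = ∑ p : P4, F p.1 p.2.1 p.2.2.1 p.2.2.2 := by
  simp [Fintype.sum_prod_type]

def s34 : P6 → P6 := fun p => (p.1, p.2.1, p.2.2.2.1, p.2.2.1, p.2.2.2.2.1, p.2.2.2.2.2)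

lemma s34_inv : Function.Involutive s34 := fun _ => rfl

def s1234 : P6 → P6 := fun p => (p.2.2.1, p.2.2.2.1, p.1, p.2.1, p.2.2.2.2.1, p.2.2.2.2.2)

lemma s1234_inv : Function.Involutive s1234 := fun _ => rfl

def s4 : P4 → P4 := fun p => (p.2.2.1, p.2.2.2, p.1, p.2.1)

lemma s4_inv : Function.Involutive s4 := fun _ => rfl

lemma sum_reindex6 (σ : P6 → P6) (hσ : Function.Involutive σ) (f : P6 → ℝ) :
    ∑ p, f (σ p) = ∑ p, f p := hσ.bijective.sum_comp f

lemma sum_reindex4 (σ : P4 → P4) (hσ : Function.Involutive σ) (f : P4 → ℝ) :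
    ∑ p, f (σ p) = ∑ p, f p := hσ.bijective.sum_comp f

lemma hfac (c : ℝ) (f g : Fin 4 → Fin 4 → ℝ) :
    (∑ a, ∑ b, ∑ u, ∑ v, c * (f a b * g u v))
      = c * ((∑ a, ∑ b, f a b) * (∑ u, ∑ v, g u v)) := by
  have h1 : (∑ a, ∑ b, f a b) * (∑ u, ∑ v, g u v)
      = ∑ a, ∑ b, ∑ u, ∑ v, f a b * g u v := by
    rw [Finset.sum_mul]
    refine Finset.sum_congr rfl fun a _ => ?_
    rw [Finset.sum_mul]
    refine Finset.sum_congr rfl fun b _ => ?_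
    rw [Finset.mul_sum]
    refine Finset.sum_congr rfl fun u _ => ?_
    rw [Finset.mul_sum]
  rw [h1]
  simp only [Finset.mul_sum]

lemma const4 (c : ℝ) (f : Fin 4 → Fin 4 → Fin 4 → Fin 4 → ℝ) :
    (∑ a, ∑ b, ∑ u, ∑ v, c * f a b u v) = c * (∑ a, ∑ b, ∑ u, ∑ v, f a b u v) := by
  simp [Finset.mul_sum]

lemma sum_mul_const (c : ℝ) (f : Fin 4 → Fin 4 → ℝ) :
    (∑ a, ∑ b, f a b * c) = (∑ a, ∑ b, f a b) * c := by
  simp [Finset.sum_mul]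

/-- Key algebraic identity: the complete trace of the basic superenergy tensor
of any double (1,2)-form vanishes in dimension 4. -/
lemma SE_trace_zero (M N : Fin 4 → Fin 4 → ℝ) (A : Fin 4 → Fin 4 → Fin 4 → ℝ)
    (hNs : ∀ a b, N a b = N b a)
    (htr : (∑ a, ∑ b, N a b * M a b) = 4) :
    (∑ a, ∑ b, ∑ c, ∑ d, N a b * N c d * SE M N A a b c d) = 0 := by
  have hSE : ∀ a b c d, N a b * N c d * SE M N A a b c d =
      -(N a b * N c d * (∑ f, ∑ k, A a c f * N f k * A b d k))
      - (N a b * N c d * (∑ f, ∑ k, A a d f * N f k * A b c k))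
      + ((N a b * M a b) * (N c d * (∑ e, ∑ i, ∑ f, ∑ k, N e i * N f k * A e c f * A i d k)))
      + ((1/2) * ((N a b * (∑ e, ∑ i, ∑ f, ∑ k, N e i * N f k * A a e f * A b i k)) * (N c d * M c d)))
      - ((1/4) * ((N a b * M a b) * ((N c d * M c d) *
          (∑ e, ∑ i, ∑ f, ∑ k, ∑ p, ∑ q, N e i * N f k * N p q * A e f p * A i k q)))) := by
    intro a b c d; simp only [SE]; ring
  simp only [hSE]
  simp only [Finset.sum_add_distrib, Finset.sum_sub_distrib, Finset.sum_neg_distrib]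
  set Q : ℝ := ∑ p : P6, Qt N A p with hQdef
  -- the five traced pieces
  have E1 : (∑ a, ∑ b, ∑ c, ∑ d, N a b * N c d * (∑ f, ∑ k, A a c f * N f k * A b d k)) = Q := by
    have h : ∀ a b c d, N a b * N c d * (∑ f, ∑ k, A a c f * N f k * A b d k)
        = ∑ f, ∑ k, Qt N A (a, b, c, d, f, k) := by
      intro a b c d
      rw [Finset.mul_sum]
      refine Finset.sum_congr rfl fun f _ => ?_
      rw [Finset.mul_sum]
      refine Finset.sum_congr rfl fun k _ => ?_
      simp only [Qt]; ring
    simp only [h]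
    rw [flat6 (fun a b c d f k => Qt N A (a, b, c, d, f, k))]
  have E2 : (∑ a, ∑ b, ∑ c, ∑ d, N a b * N c d * (∑ f, ∑ k, A a d f * N f k * A b c k)) = Q := by
    have h : ∀ a b c d, N a b * N c d * (∑ f, ∑ k, A a d f * N f k * A b c k)
        = ∑ f, ∑ k, Qt N A (s34 (a, b, c, d, f, k)) := by
      intro a b c d
      rw [Finset.mul_sum]
      refine Finset.sum_congr rfl fun f _ => ?_
      rw [Finset.mul_sum]
      refine Finset.sum_congr rfl fun k _ => ?_
      simp only [Qt, s34]
      rw [hNs c d]; ring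
    simp only [h]
    rw [flat6 (fun a b c d f k => Qt N A (s34 (a, b, c, d, f, k)))]
    exact sum_reindex6 s34 s34_inv (Qt N A)
  have E3 : (∑ c, ∑ d, N c d * (∑ e, ∑ i, ∑ f, ∑ k, N e i * N f k * A e c f * A i d k)) = Q := by
    have h : ∀ c d, N c d * (∑ e, ∑ i, ∑ f, ∑ k, N e i * N f k * A e c f * A i d k)
        = ∑ e, ∑ i, ∑ f, ∑ k, Qt N A (s1234 (c, d, e, i, f, k)) := by
      intro c d
      rw [Finset.mul_sum]
      refine Finset.sum_congr rfl fun e _ => ?_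
      rw [Finset.mul_sum]
      refine Finset.sum_congr rfl fun i _ => ?_
      rw [Finset.mul_sum]
      refine Finset.sum_congr rfl fun f _ => ?_
      rw [Finset.mul_sum]
      refine Finset.sum_congr rfl fun k _ => ?_
      simp only [Qt, s1234]; ring
    simp only [h]
    rw [flat6 (fun c d e i f k => Qt N A (s1234 (c, d, e, i, f, k)))]
    exact sum_reindex6 s1234 s1234_inv (Qt N A)
  have E4 : (∑ a, ∑ b, N a b * (∑ e, ∑ i, ∑ f, ∑ k, N e i * N f k * A a e f * A b i k)) = Q := by
    have h : ∀ a b, N a b * (∑ e, ∑ i, ∑ f, ∑ k, N e i * N f k * A a e f * A b i k)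
        = ∑ e, ∑ i, ∑ f, ∑ k, Qt N A (a, b, e, i, f, k) := by
      intro a b
      rw [Finset.mul_sum]
      refine Finset.sum_congr rfl fun e _ => ?_
      rw [Finset.mul_sum]
      refine Finset.sum_congr rfl fun i _ => ?_
      rw [Finset.mul_sum]
      refine Finset.sum_congr rfl fun f _ => ?_
      rw [Finset.mul_sum]
      refine Finset.sum_congr rfl fun k _ => ?_
      simp only [Qt]; ring
    simp only [h]
    rw [flat6 (fun a b e i f k => Qt N A (a, b, e, i, f, k))]
  have E5 : (∑ e, ∑ i, ∑ f, ∑ k, ∑ p, ∑ q, N e i * N f k * N p q * A e f p * A i k q) = Q := by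
    have h : ∀ e i f k p q, N e i * N f k * N p q * A e f p * A i k q
        = Qt N A (e, i, f, k, p, q) := by intro e i f k p q; rfl
    simp only [h]
    rw [flat6 (fun e i f k p q => Qt N A (e, i, f, k, p, q))]
  -- assemble
  have T3 : (∑ a, ∑ b, ∑ c, ∑ d,
      (N a b * M a b) * (N c d * (∑ e, ∑ i, ∑ f, ∑ k, N e i * N f k * A e c f * A i d k)))
      = 4 * Q := by
    have := hfac 1 (fun a b => N a b * M a b)
      (fun c d => N c d * (∑ e, ∑ i, ∑ f, ∑ k, N e i * N f k * A e c f * A i d k))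
    simp only [one_mul] at this
    rw [this, htr, E3]
  have T4 : (∑ a, ∑ b, ∑ c, ∑ d, (1/2) *
      ((N a b * (∑ e, ∑ i, ∑ f, ∑ k, N e i * N f k * A a e f * A b i k)) * (N c d * M c d)))
      = (1/2) * (4 * Q) := by
    rw [hfac ((1:ℝ)/2)
      (fun a b => N a b * (∑ e, ∑ i, ∑ f, ∑ k, N e i * N f k * A a e f * A b i k))
      (fun c d => N c d * M c d)]
    rw [htr, E4]; ring
  have T5 : (∑ a, ∑ b, ∑ c, ∑ d, (1/4) * ((N a b * M a b) * ((N c d * M c d) *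
        (∑ e, ∑ i, ∑ f, ∑ k, ∑ p, ∑ q, N e i * N f k * N p q * A e f p * A i k q))))
      = (1/4) * (16 * Q) := by
    rw [hfac ((1:ℝ)/4) (fun a b => N a b * M a b)
      (fun c d => (N c d * M c d) *
        (∑ e, ∑ i, ∑ f, ∑ k, ∑ p, ∑ q, N e i * N f k * N p q * A e f p * A i k q))]
    rw [htr, sum_mul_const, htr, E5]; ring
  rw [E1, E2, T3, T4, T5]
  ring

end ChevAux

/-- For a source-free Maxwell field the trace H_{ab} = g^{cd}H_{cdab} of the
Chevreton tensor is itself trace-free: g^{ab} H_{ab} = 0, i.e. the complete trace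
g^{ab} g^{cd} H_{abcd} of the Chevreton tensor vanishes identically. -/
theorem chevreton_trace_is_tracefree
    (U : Set Pt) (hU : IsOpen U) (g ginv F : Met)
    (hg : SmoothCompOn g U) (hgsym : SymmOn g U) (hsig : LorentzSignatureOn g U)
    (hginv : SmoothCompOn ginv U) (hinv : InverseOn g ginv U)
    (hF : MaxwellOn g ginv F U) :
    ∀ x ∈ U, (∑ a, ∑ b, ginv x a b * ChevTr g ginv F x a b) = 0 := by
  intro x hx
  set M : Fin 4 → Fin 4 → ℝ := g x with hM
  set N : Fin 4 → Fin 4 → ℝ := ginv x with hN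
  set A : Fin 4 → Fin 4 → Fin 4 → ℝ := covdF g ginv F x with hA
  -- matrix facts
  have hMN : Matrix.of (g x) * Matrix.of (ginv x) = 1 := by
    ext a b
    simpa [Matrix.mul_apply, Matrix.one_apply] using hinv x hx a b
  have hNM : Matrix.of (ginv x) * Matrix.of (g x) = 1 := mul_eq_one_comm.mp hMN
  have hMsym : Matrix.transpose (Matrix.of (g x)) = Matrix.of (g x) := by
    ext a b; exact hgsym x hx b a
  have hNsymM : Matrix.transpose (Matrix.of (ginv x)) = Matrix.of (ginv x) := by
    have h1 : Matrix.transpose (Matrix.of (ginv x)) * Matrix.of (g x) = 1 := by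
      calc Matrix.transpose (Matrix.of (ginv x)) * Matrix.of (g x)
          = Matrix.transpose (Matrix.of (ginv x)) * Matrix.transpose (Matrix.of (g x)) := by rw [hMsym]
        _ = Matrix.transpose (Matrix.of (g x) * Matrix.of (ginv x)) := (Matrix.transpose_mul _ _).symm
        _ = 1 := by rw [hMN, Matrix.transpose_one]
    calc Matrix.transpose (Matrix.of (ginv x))
        = Matrix.transpose (Matrix.of (ginv x)) * 1 := by rw [mul_one]
      _ = Matrix.transpose (Matrix.of (ginv x)) * (Matrix.of (g x) * Matrix.of (ginv x)) := by rw [hMN]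
      _ = (Matrix.transpose (Matrix.of (ginv x)) * Matrix.of (g x)) * Matrix.of (ginv x) := by
          rw [mul_assoc]
      _ = Matrix.of (ginv x) := by rw [h1, one_mul]
  have hNs : ∀ a b, N a b = N b a := by
    intro a b
    have := congrFun (congrFun hNsymM b) a
    simpa [Matrix.transpose_apply] using this
  have htr : (∑ a, ∑ b, N a b * M a b) = 4 := by
    have h1 : (∑ a, ∑ b, N a b * M a b)
        = ∑ a, (Matrix.of (ginv x) * Matrix.of (g x)) a a := by
      refine Finset.sum_congr rfl fun a _ => ?_
      rw [Matrix.mul_apply]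
      refine Finset.sum_congr rfl fun b _ => ?_
      simp only [Matrix.of_apply, hM, hN]
      rw [hgsym x hx a b]
    rw [h1, hNM]
    simp [Matrix.one_apply]
  have key := ChevAux.SE_trace_zero M N A hNs htr
  -- rewrite the goal as an average of two full traces
  have hterm : ∀ a b, ginv x a b * ChevTr g ginv F x a b
      = ∑ c, ∑ d, ((1/2) * (N a b * N c d * SE M N A c d a b)
          + (1/2) * (N a b * N c d * SE M N A a b c d)) := by
    intro a b
    rw [ChevTr, Finset.mul_sum]
    refine Finset.sum_congr rfl fun c _ => ?_
    rw [Finset.mul_sum]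
    refine Finset.sum_congr rfl fun d _ => ?_
    simp only [Chev, Etens, hM, hN, hA]
    ring
  simp only [← hN] at hterm
  simp only [hterm]
  simp only [Finset.sum_add_distrib]
  have X1 : (∑ a, ∑ b, ∑ c, ∑ d, N a b * N c d * SE M N A c d a b) = 0 := by
    rw [ChevAux.flat4 (fun a b c d => N a b * N c d * SE M N A c d a b)]
    show (∑ p : ChevAux.P4,
        N p.1 p.2.1 * N p.2.2.1 p.2.2.2 * SE M N A p.2.2.1 p.2.2.2 p.1 p.2.1) = 0
    have e1 : (∑ p : ChevAux.P4,
          N p.1 p.2.1 * N p.2.2.1 p.2.2.2 * SE M N A p.2.2.1 p.2.2.2 p.1 p.2.1)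
        = ∑ p : ChevAux.P4, (fun q : ChevAux.P4 =>
            N q.1 q.2.1 * N q.2.2.1 q.2.2.2 * SE M N A q.1 q.2.1 q.2.2.1 q.2.2.2)
            (ChevAux.s4 p) :=
      Finset.sum_congr rfl fun p _ => by simp only [ChevAux.s4]; ring
    rw [e1]
    exact (ChevAux.sum_reindex4 ChevAux.s4 ChevAux.s4_inv
        (fun q : ChevAux.P4 =>
          N q.1 q.2.1 * N q.2.2.1 q.2.2.2 * SE M N A q.1 q.2.1 q.2.2.1 q.2.2.2)).trans
      ((ChevAux.flat4 fun a b c d => N a b * N c d * SE M N A a b c d).symm.trans key)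
  have c1 := ChevAux.const4 ((1:ℝ)/2) (fun a b c d => N a b * N c d * SE M N A c d a b)
  have c2 := ChevAux.const4 ((1:ℝ)/2) (fun a b c d => N a b * N c d * SE M N A a b c d)
  rw [c1, c2, X1, key]
  ring
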